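/- For the ordinary path (h = 1): the number of covering pairs in the poset of subsets of {1,...,n} containing no two consecutive integers, ordered by inclusion, equals Σ_{i=1}^{n} F_i · F_{n-i+1}, where F is the Fibonacci sequence with F_1 = F_2 = 1. -/

import Mathlib

open Finset

/-- The independent subsets of the h-th power of the path on vertices {1,...,n}:
subsets of {1,...,n} in which any two distinct elements differ by more than h. -/
def Indep (n h : ℕ) : Finset (Finset ℕ) :=
  (Finset.Icc 1 n).powerset.filter (fun S => ∀ a ∈ S, ∀ b ∈ S, a < b → h < b - a)

/-- The independent k-subsets. -/
def IndepK (n h k : ℕ) : Finset (Finset ℕ) :=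
  (Indep n h).filter (fun S => S.card = k)

/-- The number of covering pairs (S,T): T ⊆ S, |S| = |T| + 1, both independent. -/
def coverCount (n h : ℕ) : ℕ :=
  ((Indep n h ×ˢ Indep n h).filter
    (fun p => p.2 ⊆ p.1 ∧ p.1.card = p.2.card + 1)).card

/-! A covering pair `(S, T)` of independent sets is `S` together with the element of `S` removed
from it, because subsets of independent sets are independent; so the number of covering pairs
is `∑ |S|`. An independent subset of `{1, …, n + h + 1}` either avoids `n + h + 1` or is
`n + h + 1` added to an independent subset of `{1, …, n}`, which gives the recurrence
`coverCount (n + h + 1) h = coverCount (n + h) h + coverCount n h + #(Indep n h)`.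
For `h = 1` the independent sets are counted by `F (n + 2)`, and the convolution
`∑ F i * F (n - i + 1)` obeys the same recurrence. -/

theorem Finset.covBy_iff_subset_and_card_eq {α : Type*} [DecidableEq α] {s t : Finset α} :
    t ⋖ s ↔ t ⊆ s ∧ #s = #t + 1 := by
  rw [covBy_iff_card_sdiff_eq_one]
  refine and_congr_right fun hts => ?_
  have := card_le_card hts
  rw [card_sdiff_of_subset hts]
  omega

theorem IsLowerSet.card_covByPairs_eq_sum_card {α : Type*} [DecidableEq α]
    {𝒜 : Finset (Finset α)} (h𝒜 : IsLowerSet (𝒜 : Set (Finset α))) :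
    #((𝒜 ×ˢ 𝒜).filter (fun p => p.2 ⊆ p.1 ∧ #p.1 = #p.2 + 1)) = ∑ s ∈ 𝒜, #s := by
  rw [card_filter, sum_product]
  refine sum_congr rfl fun s hs => ?_
  have hcovered : 𝒜.filter (fun t => t ⊆ s ∧ #s = #t + 1) = s.image s.erase := by
    ext t
    simp only [mem_filter, mem_image, ← covBy_iff_subset_and_card_eq, covBy_iff_exists_erase]
    constructor
    · exact fun ⟨_, hst⟩ => hst
    · rintro ⟨a, ha, rfl⟩
      exact ⟨h𝒜 (erase_subset a s) hs, a, ha, rfl⟩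
  rw [← card_filter, hcovered, card_image_of_injOn (erase_injOn s)]

theorem mem_Indep {n h : ℕ} {S : Finset ℕ} :
    S ∈ Indep n h ↔ (∀ a ∈ S, 1 ≤ a ∧ a ≤ n) ∧ ∀ a ∈ S, ∀ b ∈ S, a < b → h < b - a := by
  simp only [Indep, mem_filter, mem_powerset, subset_iff, mem_Icc]

theorem isLowerSet_Indep (n h : ℕ) : IsLowerSet (Indep n h : Set (Finset ℕ)) := by
  intro S T hTS hS
  simp only [mem_coe, mem_Indep] at hS ⊢
  exact ⟨fun a ha => hS.1 a (hTS ha), fun a ha b hb => hS.2 a (hTS ha) b (hTS hb)⟩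

theorem coverCount_eq_sum_card (n h : ℕ) : coverCount n h = ∑ S ∈ Indep n h, #S :=
  (isLowerSet_Indep n h).card_covByPairs_eq_sum_card

section Decomposition

variable {n h : ℕ}

theorem Indep_subset_Indep {m : ℕ} (hmn : m ≤ n) : Indep m h ⊆ Indep n h := by
  intro S hS
  rw [mem_Indep] at hS ⊢
  exact ⟨fun a ha => (hS.1 a ha).imp_right (·.trans hmn), hS.2⟩

theorem notMem_of_mem_Indep {S : Finset ℕ} {m : ℕ} (hS : S ∈ Indep n h) (hm : n < m) : m ∉ S :=
  fun hmS => by have := (mem_Indep.1 hS).1 m hmS; omega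

theorem insert_mem_Indep {T : Finset ℕ} (hT : T ∈ Indep n h) :
    insert (n + h + 1) T ∈ Indep (n + h + 1) h := by
  rw [mem_Indep] at hT ⊢
  refine ⟨by simpa using fun a ha => (hT.1 a ha).imp_right (by omega), ?_⟩
  simp only [mem_insert, forall_eq_or_imp]
  refine ⟨⟨by omega, fun b hb hlt => by have := hT.1 b hb; omega⟩,
    fun a ha => ⟨fun _ => by have := hT.1 a ha; omega, hT.2 a ha⟩⟩

theorem erase_mem_Indep {S : Finset ℕ} (hS : S ∈ Indep (n + h + 1) h) (htop : n + h + 1 ∈ S) :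
    S.erase (n + h + 1) ∈ Indep n h := by
  rw [mem_Indep] at hS ⊢
  refine ⟨fun a ha => ?_, fun a ha b hb => hS.2 a (mem_of_mem_erase ha) b (mem_of_mem_erase hb)⟩
  obtain ⟨hne, ha⟩ := mem_erase.1 ha
  have := hS.1 a ha
  have := hS.2 a ha _ htop (by omega)
  omega

theorem mem_Indep_of_notMem {S : Finset ℕ} (hS : S ∈ Indep (n + h + 1) h)
    (htop : n + h + 1 ∉ S) : S ∈ Indep (n + h) h := by
  rw [mem_Indep] at hS ⊢
  refine ⟨fun a ha => ?_, hS.2⟩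
  have := hS.1 a ha
  have : a ≠ n + h + 1 := fun hEq => htop (hEq ▸ ha)
  omega

theorem Indep_add_succ :
    Indep (n + h + 1) h = Indep (n + h) h ∪ (Indep n h).image (insert (n + h + 1)) := by
  ext S
  simp only [mem_union, mem_image]
  constructor
  · intro hS
    by_cases htop : n + h + 1 ∈ S
    · exact Or.inr ⟨_, erase_mem_Indep hS htop, insert_erase htop⟩
    · exact Or.inl (mem_Indep_of_notMem hS htop)
  · rintro (hS | ⟨T, hT, rfl⟩)
    · exact Indep_subset_Indep (by omega) hS
    · exact insert_mem_Indep hT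

theorem disjoint_Indep_image_insert :
    Disjoint (Indep (n + h) h) ((Indep n h).image (insert (n + h + 1))) := by
  simp only [disjoint_right, mem_image]
  rintro _ ⟨T, -, rfl⟩ hS
  exact notMem_of_mem_Indep hS (Nat.lt_succ_self _) (mem_insert_self _ _)

theorem sum_Indep_add_succ {M : Type*} [AddCommMonoid M] (f : Finset ℕ → M) :
    ∑ S ∈ Indep (n + h + 1) h, f S =
      ∑ S ∈ Indep (n + h) h, f S + ∑ T ∈ Indep n h, f (insert (n + h + 1) T) := by
  rw [Indep_add_succ, sum_union disjoint_Indep_image_insert, sum_image]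
  intro T hT T' hT' hEq
  have hnot := fun {U} (hU : U ∈ Indep n h) =>
    notMem_of_mem_Indep hU (show n < n + h + 1 by omega)
  rw [← erase_insert (hnot hT), ← erase_insert (hnot hT'), hEq]

theorem card_Indep_add_succ :
    #(Indep (n + h + 1) h) = #(Indep (n + h) h) + #(Indep n h) := by
  simpa only [card_eq_sum_ones] using sum_Indep_add_succ (n := n) (h := h) fun _ => 1

theorem coverCount_add_succ :
    coverCount (n + h + 1) h = coverCount (n + h) h + coverCount n h + #(Indep n h) := by
  simp only [coverCount_eq_sum_card, sum_Indep_add_succ]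
  rw [sum_congr rfl fun T hT => card_insert_of_notMem
    (notMem_of_mem_Indep hT (show n < n + h + 1 by omega)), sum_add_distrib, card_eq_sum_ones,
    add_assoc]

end Decomposition

theorem card_Indep_one (n : ℕ) : #(Indep n 1) = Nat.fib (n + 2) := by
  induction n using Nat.twoStepInduction with
  | zero => rfl
  | one => rfl
  | more n ih₀ ih₁ => rw [card_Indep_add_succ, ih₀, ih₁, Nat.fib_add_two (n := n + 2), add_comm]

def fibConv (n : ℕ) : ℕ := ∑ i ∈ Icc 1 n, Nat.fib i * Nat.fib (n - i + 1)

theorem fibConv_add_two (n : ℕ) :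
    fibConv (n + 2) = fibConv (n + 1) + fibConv n + Nat.fib (n + 2) := by
  have hsplit : ∀ i ∈ Icc 1 (n + 1), Nat.fib i * Nat.fib (n + 2 - i + 1) =
      Nat.fib i * Nat.fib (n + 1 - i + 1) + Nat.fib i * Nat.fib (n + 1 - i) := fun i hi => by
    rw [mem_Icc] at hi
    rw [show n + 2 - i + 1 = n + 1 - i + 2 by omega, Nat.fib_add_two, mul_add, add_comm]
  have hshift : ∑ i ∈ Icc 1 (n + 1), Nat.fib i * Nat.fib (n + 1 - i) = fibConv n := by
    rw [sum_Icc_succ_top (by omega), Nat.sub_self, Nat.fib_zero, mul_zero, add_zero]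
    exact sum_congr rfl fun i hi => by rw [mem_Icc] at hi; rw [show n + 1 - i = n - i + 1 by omega]
  rw [fibConv, sum_Icc_succ_top (by omega), Nat.sub_self, zero_add, Nat.fib_one, mul_one,
    sum_congr rfl hsplit, sum_add_distrib, hshift]
  rfl

theorem stmt13 (n : ℕ) :
    coverCount n 1 = ∑ i ∈ Finset.Icc 1 n, Nat.fib i * Nat.fib (n - i + 1) := by
  change coverCount n 1 = fibConv n
  induction n using Nat.twoStepInduction with
  | zero => rfl
  | one => rfl
  | more n ih₀ ih₁ => rw [coverCount_add_succ, card_Indep_one, fibConv_add_two, ih₀, ih₁]
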